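/- arXiv:1411.1382 — 2 statements merged into one kernel-verified Lean document; each statement's English description precedes it below -/
import Mathlib

section
/- Every polynomial f in Int(E, D') satisfies a monic polynomial equation with coefficients in Int(E, D); specifically, the product over a ∈ E of monic polynomials m_{f(a)} ∈ D[X] with m_{f(a)}(f(a)) = 0 yields a monic m ∈ D[X] with m(f(X)) ∈ Int(E, D). -/
open Polynomial

variable (D : Type*) [CommRing D] [IsDomain D]

noncomputable abbrev K := FractionRing D

/-- The ring `Int(E, D) = {f ∈ K[X] : f(E) ⊆ D}` of polynomials that are
integer-valued on a subset `E ⊆ K`, as a subring of `K[X]`. -/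
noncomputable def IntSub (E : Set (K D)) : Subring (Polynomial (K D)) where
  carrier := {f | ∀ a ∈ E, ∃ d : D, f.eval a = algebraMap D (K D) d}
  zero_mem' := fun a _ => ⟨0, by simp⟩
  one_mem' := fun a _ => ⟨1, by simp⟩
  add_mem' := by
    intro f g hf hg a ha
    obtain ⟨d1, h1⟩ := hf a ha; obtain ⟨d2, h2⟩ := hg a ha
    exact ⟨d1 + d2, by simp [h1, h2]⟩
  mul_mem' := by
    intro f g hf hg a ha
    obtain ⟨d1, h1⟩ := hf a ha; obtain ⟨d2, h2⟩ := hg a ha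
    exact ⟨d1 * d2, by simp [h1, h2]⟩
  neg_mem' := by
    intro f hf a ha
    obtain ⟨d, h⟩ := hf a ha
    exact ⟨-d, by simp [h]⟩

theorem exists_monic_forall_aeval_eq_zero {R A : Type*} [CommRing R] [CommRing A] [Algebra R A]
    (s : Finset A) (hs : ∀ x ∈ s, IsIntegral R x) :
    ∃ p : R[X], p.Monic ∧ ∀ x ∈ s, aeval x p = 0 := by
  choose p hp using hs
  refine ⟨∏ x ∈ s.attach, p x x.2, monic_prod_of_monic _ _ fun x _ => (hp x x.2).1, fun x hx => ?_⟩
  rw [map_prod]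
  exact Finset.prod_eq_zero (Finset.mem_attach s ⟨x, hx⟩) (hp x hx).2

/-- Every `f ∈ Int(E, D')` (with `D'` the integral closure of `D` in `K`) satisfies a monic
equation over `Int(E, D)`: there is a monic `m ∈ D[X]` vanishing at every value `f(a)`,
`a ∈ E`, and in particular `m(f(X)) ∈ Int(E, D)`. -/
theorem exists_monic_of_integral_valued (E : Set (K D)) (hE : E.Finite)
    (f : Polynomial (K D)) (hf : ∀ a ∈ E, IsIntegral D (f.eval a)) :
    ∃ m : D[X], m.Monic ∧ (∀ a ∈ E, (m.map (algebraMap D (K D))).eval (f.eval a) = 0) ∧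
      (m.map (algebraMap D (K D))).comp f ∈ IntSub D E := by
  obtain ⟨m, hmonic, hm⟩ := exists_monic_forall_aeval_eq_zero (hE.image (eval · f)).toFinset
    (by simpa using hf)
  have hroot : ∀ a ∈ E, (m.map (algebraMap D (K D))).eval (f.eval a) = 0 := fun a ha => by
    rw [eval_map_algebraMap]
    exact hm _ (by simpa using ⟨a, ha, rfl⟩)
  exact ⟨m, hmonic, hroot, fun a ha => ⟨0, by rw [eval_comp, hroot a ha, map_zero]⟩⟩
end

section
/- Let D be integrally closed with quotient field K, p ∈ D[X] monic of degree n with multi-set of roots Ω_p = {α_1,...,α_n} in a splitting field F, and D_F the integral closure of D in F. For f ∈ K[X], the following are equivalent: (i) f ∈ D(p) = D[X] + p·K[X]; (ii) Φ^k(f)(α_1,...,α_{k+1}) ∈ D[α_1,...,α_{k+1}] for all 0 ≤ k < n; (iii) Φ^k(f)(α_1,...,α_{k+1}) ∈ D_F for all 0 ≤ k < n. -/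
open Polynomial

variable (D : Type*) [CommRing D] [IsDomain D]

/-- The pullback `D(p) = D[X] + p·K[X]` as a subring of `K[X]`. -/
noncomputable def Dp (p : D[X]) : Subring (Polynomial (K D)) where
  carrier := {f | ∃ r : D[X], ∃ q : Polynomial (K D),
    f = r.map (algebraMap D (K D)) + p.map (algebraMap D (K D)) * q}
  zero_mem' := ⟨0, 0, by simp⟩
  one_mem' := ⟨1, 0, by simp⟩
  add_mem' := by
    rintro a b ⟨r1, q1, rfl⟩ ⟨r2, q2, rfl⟩
    exact ⟨r1 + r2, q1 + q2, by push_cast [Polynomial.map_add]; ring⟩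
  mul_mem' := by
    rintro a b ⟨r1, q1, rfl⟩ ⟨r2, q2, rfl⟩
    exact ⟨r1 * r2, r1.map (algebraMap D (K D)) * q2 + q1 * (r2.map (algebraMap D (K D)))
      + p.map (algebraMap D (K D)) * q1 * q2, by push_cast [Polynomial.map_mul]; ring⟩
  neg_mem' := by
    rintro a ⟨r, q, rfl⟩
    exact ⟨-r, -q, by push_cast [Polynomial.map_neg]; ring⟩



/-- The `k`-th divided difference `Φ^k(f)(a 0, …, a k)` of a polynomial `f`, defined (in a way
valid also for repeated nodes) as the coefficient of `X^k` in the remainder of the division of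
`f` by `∏ i, (X - a i)`; for pairwise distinct nodes this agrees with the recursive definition
`Φ^k(f)(X_0,…,X_k) = (Φ^{k-1}(f)(X_0,…,X_{k-1}) - Φ^{k-1}(f)(X_0,…,X_{k-2},X_k))/(X_{k-1}-X_k)`. -/
noncomputable def divDiff {L : Type*} [Field L] (k : ℕ) (f : Polynomial L)
    (a : Fin (k + 1) → L) : L :=
  (f %ₘ ∏ i, (X - C (a i))).coeff k

/-!
Divided differences are the coefficients of the Newton expansion: writing
`N_j = ∏_{i<j} (X - α_i)`, one has `f mod N_{k+1} = ∑_{j≤k} Φ^j(f)(α_0,…,α_j) · N_j`.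
If `f = r + p q` with `r ∈ D[X]`, then `N_{k+1} ∣ p` gives `f mod N_{k+1} = r mod N_{k+1}`,
whose coefficients lie in `D[α_0,…,α_k]` because `N_{k+1}` is monic over that ring. Conversely,
if all `Φ^k(f)(α_0,…,α_k)` are integral, the expansion for `k + 1 = n` shows that `f mod p` has
integral coefficients; these lie in `K`, hence in `D`, and `f = (f mod p) + p · (f div p)`.
-/

open Lagrange Finset

namespace Polynomial

variable {R : Type*} [CommRing R]

theorem modByMonic_modByMonic_of_dvd (f : R[X]) {p q : R[X]} (hp : p.Monic) (hpq : p ∣ q) :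
    f %ₘ q %ₘ p = f %ₘ p :=
  modByMonic_eq_of_dvd_sub hp (hpq.trans (dvd_modByMonic_sub f q))

theorem modByMonic_add_C_coeff_natDegree_mul {q r : R[X]} (hq : q.Monic)
    (hr : r.degree ≤ q.natDegree) : r %ₘ q + C (r.coeff q.natDegree) * q = r := by
  nontriviality R
  set c := r.coeff q.natDegree
  have hdeg : (r - C c * q).degree < q.degree := by
    rw [degree_eq_natDegree hq.ne_zero, degree_lt_iff_coeff_zero]
    intro m hm
    rw [coeff_sub, coeff_C_mul]
    rcases hm.eq_or_lt with rfl | hlt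
    · rw [hq.coeff_natDegree, mul_one, sub_self]
    · rw [coeff_eq_zero_of_degree_lt (hr.trans_lt (by exact_mod_cast hlt)),
        coeff_eq_zero_of_natDegree_lt hlt, mul_zero, sub_zero]
  rw [modByMonic_eq_of_dvd_sub hq (p₂ := r - C c * q) ⟨C c, by ring⟩,
    (modByMonic_eq_self_iff hq).2 hdeg, sub_add_cancel]

variable {S : Type*} [CommRing S] {f : R →+* S}

theorem modByMonic_mem_lifts {a b : S[X]} (ha : a ∈ lifts f) (hb : b ∈ lifts f)
    (hmonic : b.Monic) : a %ₘ b ∈ lifts f := by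
  obtain ⟨a, rfl⟩ := (mem_lifts _).1 ha
  obtain ⟨b, rfl, -, hb⟩ := lifts_and_natDegree_eq_and_monic hb hmonic
  exact (mem_lifts _).2 ⟨a %ₘ b, map_modByMonic f hb⟩

theorem mem_lifts_algebraMap_iff [Algebra R S] {A : Subalgebra R S} {p : S[X]} :
    p ∈ lifts (algebraMap A S) ↔ ∀ n, p.coeff n ∈ A := by
  rw [lifts_iff_coeff_lifts, ← RingHom.coe_range, Subalgebra.range_algebraMap]
  rfl

end Polynomial

namespace Lagrange

variable {R : Type*} [CommRing R]

theorem modByMonic_nodal_range_eq_sum (f : R[X]) (α : ℕ → R) (k : ℕ) :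
    f %ₘ nodal (range k) α =
      ∑ j ∈ range k, C ((f %ₘ nodal (range (j + 1)) α).coeff j) * nodal (range j) α := by
  induction k with
  | zero => simp [modByMonic_one]
  | succ k ih =>
    nontriviality R
    have hdvd : nodal (range k) α ∣ nodal (range (k + 1)) α :=
      prod_dvd_prod_of_subset _ _ _ (range_subset_range.2 k.le_succ)
    have hdeg : (f %ₘ nodal (range (k + 1)) α).degree ≤ (nodal (range k) α).natDegree := by
      have := degree_modByMonic_lt f (nodal_monic (s := range (k + 1)) (v := α))
      rw [degree_nodal, card_range] at this
      rw [natDegree_nodal, card_range]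
      exact Order.le_of_lt_succ (by exact_mod_cast this)
    rw [sum_range_succ, ← ih, ← modByMonic_modByMonic_of_dvd f nodal_monic hdvd]
    simpa only [natDegree_nodal, card_range] using
      (modByMonic_add_C_coeff_natDegree_mul nodal_monic hdeg).symm

theorem nodal_mem_lifts {S ι : Type*} [CommRing S] {f : R →+* S} {s : Finset ι} {v : ι → S}
    (hv : ∀ i ∈ s, v i ∈ f.range) : nodal s v ∈ lifts f := by
  rw [lifts_iff_liftsRing]
  exact prod_mem fun i hi =>
    sub_mem ((lifts_iff_liftsRing f _).1 (X_mem_lifts f))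
      ((lifts_iff_liftsRing f _).1 (C'_mem_lifts (hv i hi)))

variable {A ι : Type*} [CommRing A] [Algebra R A] {p : R[X]} {s : Finset ι} {v : ι → A}

theorem isIntegral_of_map_eq_nodal (hp : p.Monic) (hsplit : p.map (algebraMap R A) = nodal s v)
    {i : ι} (hi : i ∈ s) : IsIntegral R (v i) :=
  ⟨p, hp, by rw [eval₂_eq_eval_map, hsplit, eval_nodal_at_node hi]⟩

theorem isIntegral_of_mem_adjoin_of_map_eq_nodal (hp : p.Monic)
    (hsplit : p.map (algebraMap R A) = nodal s v) {t : Set ι} (hts : t ⊆ s) {x : A}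
    (hx : x ∈ Algebra.adjoin R (v '' t)) : IsIntegral R x :=
  Algebra.adjoin_le (S := integralClosure R A)
    (Set.image_subset_iff.2 fun _ hi => isIntegral_of_map_eq_nodal hp hsplit (hts hi)) hx

end Lagrange

theorem IsIntegrallyClosed.mem_lifts_of_map_mem_lifts_integralClosure {R K A : Type*}
    [CommRing R] [IsIntegrallyClosed R] [Field K] [Algebra R K] [IsFractionRing R K]
    [CommRing A] [Nontrivial A] [Algebra R A] [Algebra K A] [IsScalarTower R K A] {g : K[X]}
    (hg : g.map (algebraMap K A) ∈ lifts (algebraMap (integralClosure R A) A)) :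
    g ∈ lifts (algebraMap R K) := by
  refine (lifts_iff_coeff_lifts _).2 fun m => ?_
  have hm := mem_lifts_algebraMap_iff.1 hg m
  rw [coeff_map, mem_integralClosure_iff] at hm
  exact IsIntegrallyClosed.isIntegral_iff.1 (hm.tower_bot (algebraMap K A).injective)

theorem divDiff_eq_coeff_modByMonic_nodal {L : Type*} [Field L] (f : L[X]) (α : ℕ → L)
    (k : ℕ) :
    divDiff k f (fun i : Fin (k + 1) => α i.1) = (f %ₘ nodal (range (k + 1)) α).coeff k := by
  rw [divDiff, nodal, ← Fin.prod_univ_eq_prod_range (fun i => X - C (α i)) (k + 1)]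

theorem mem_Dp_of_modByMonic_mem_lifts {R : Type*} [CommRing R] {p : R[X]} {f : (K R)[X]}
    (hf : f %ₘ p.map (algebraMap R (K R)) ∈ lifts (algebraMap R (K R))) : f ∈ Dp R p := by
  obtain ⟨r, hr⟩ := (mem_lifts _).1 hf
  exact ⟨r, f /ₘ p.map (algebraMap R (K R)), by rw [hr, modByMonic_add_div]⟩

section DividedDifferences

variable {R : Type*} [CommRing R] {L : Type*} [Field L] [Algebra R L] [Algebra (K R) L]
  [IsScalarTower R (K R) L] {p : R[X]} {n : ℕ} {α : ℕ → L}

theorem divDiff_mem_adjoin_of_mem_Dp (hsplit : p.map (algebraMap R L) = nodal (range n) α)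
    {f : (K R)[X]} (hf : f ∈ Dp R p) {k : ℕ} (hk : k < n) :
    divDiff k (f.map (algebraMap (K R) L)) (fun i : Fin (k + 1) => α i.1) ∈
      Algebra.adjoin R (α '' {i | i ≤ k}) := by
  obtain ⟨r, q, rfl⟩ := hf
  have hmap : (r.map (algebraMap R (K R)) + p.map (algebraMap R (K R)) * q).map
      (algebraMap (K R) L) =
        r.map (algebraMap R L) + nodal (range n) α * q.map (algebraMap (K R) L) := by
    rw [Polynomial.map_add, Polynomial.map_mul, Polynomial.map_map, Polynomial.map_map,
      ← IsScalarTower.algebraMap_eq, hsplit]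
  have hdvd : nodal (range (k + 1)) α ∣ nodal (range n) α :=
    prod_dvd_prod_of_subset _ _ _ (range_subset_range.2 hk)
  have hr : r.map (algebraMap R L) ∈
      lifts (algebraMap (Algebra.adjoin R (α '' {i | i ≤ k})) L) :=
    mem_lifts_algebraMap_iff.2 fun m => by rw [coeff_map]; exact Subalgebra.algebraMap_mem _ _
  have hnodal : nodal (range (k + 1)) α ∈
      lifts (algebraMap (Algebra.adjoin R (α '' {i | i ≤ k})) L) :=
    nodal_mem_lifts fun i hi =>
      ⟨⟨α i, Algebra.subset_adjoin ⟨i, Nat.lt_succ_iff.1 (mem_range.1 hi), rfl⟩⟩, rfl⟩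
  have hcoeff : ∀ m, (r.map (algebraMap R L) %ₘ nodal (range (k + 1)) α).coeff m ∈
      Algebra.adjoin R (α '' {i | i ≤ k}) :=
    mem_lifts_algebraMap_iff.1 (modByMonic_mem_lifts hr hnodal nodal_monic)
  rw [divDiff_eq_coeff_modByMonic_nodal, hmap,
    modByMonic_eq_of_dvd_sub nodal_monic (p₂ := r.map (algebraMap R L))
      (by rw [add_sub_cancel_left]; exact hdvd.mul_right _)]
  exact hcoeff k

theorem mem_Dp_of_isIntegral_divDiff [IsDomain R] [IsIntegrallyClosed R] (hp : p.Monic)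
    (hsplit : p.map (algebraMap R L) = nodal (range n) α) {f : (K R)[X]}
    (hf : ∀ k < n, IsIntegral R
      (divDiff k (f.map (algebraMap (K R) L)) (fun i : Fin (k + 1) => α i.1))) :
    f ∈ Dp R p := by
  refine mem_Dp_of_modByMonic_mem_lifts
    (IsIntegrallyClosed.mem_lifts_of_map_mem_lifts_integralClosure (A := L) ?_)
  rw [map_modByMonic _ (hp.map _), Polynomial.map_map, ← IsScalarTower.algebraMap_eq, hsplit,
    modByMonic_nodal_range_eq_sum]
  refine sum_mem fun j hj => mul_mem (C'_mem_lifts ?_) (nodal_mem_lifts fun i hi => ?_)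
  · rw [← divDiff_eq_coeff_modByMonic_nodal]
    exact ⟨⟨_, (mem_integralClosure_iff R L).2 (hf j (mem_range.1 hj))⟩, rfl⟩
  · have hαi := isIntegral_of_map_eq_nodal hp hsplit (range_subset_range.2 (mem_range.1 hj).le hi)
    exact ⟨⟨_, (mem_integralClosure_iff R L).2 hαi⟩, rfl⟩

end DividedDifferences

theorem mem_Dp_iff_divDiff_integral [IsIntegrallyClosed D]
    (L : Type*) [Field L] [Algebra D L] [Algebra (K D) L] [IsScalarTower D (K D) L]
    (p : D[X]) (hp : p.Monic) (n : ℕ) (α : ℕ → L)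
    (hsplit : p.map (algebraMap D L) = ∏ i ∈ Finset.range n, (X - C (α i)))
    (f : Polynomial (K D)) :
    ((f ∈ Dp D p ↔
        ∀ k < n, divDiff k (f.map (algebraMap (K D) L)) (fun i : Fin (k + 1) => α i.1) ∈
          Algebra.adjoin D (α '' {i | i ≤ k})) ∧
      ((∀ k < n, divDiff k (f.map (algebraMap (K D) L)) (fun i : Fin (k + 1) => α i.1) ∈
          Algebra.adjoin D (α '' {i | i ≤ k})) ↔
        ∀ k < n, IsIntegral D
          (divDiff k (f.map (algebraMap (K D) L)) (fun i : Fin (k + 1) => α i.1)))) := by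
  have hsub (k : ℕ) (hk : k < n) : {i | i ≤ k} ⊆ (range n : Set ℕ) :=
    fun _ hi => mem_range.2 (lt_of_le_of_lt hi hk)
  have mem_adjoin_of_mem_Dp (hf : f ∈ Dp D p) (k : ℕ) (hk : k < n) :=
    divDiff_mem_adjoin_of_mem_Dp hsplit hf hk
  have mem_Dp_of_isIntegral := mem_Dp_of_isIntegral_divDiff (f := f) hp hsplit
  refine ⟨⟨mem_adjoin_of_mem_Dp, fun h => mem_Dp_of_isIntegral fun k hk => ?_⟩,
    ⟨fun h k hk => ?_, fun h => mem_adjoin_of_mem_Dp (mem_Dp_of_isIntegral h)⟩⟩ <;>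
  exact isIntegral_of_mem_adjoin_of_map_eq_nodal hp hsplit (hsub k hk) (h k hk)
end
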